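/- Let α > −1/4 and β = √(1+4α). The Wronskian of the two explicit kernel elements of the linearized operator is identically 1: for all R > 0, φ₀'(R)·θ₀(R) − φ₀(R)·θ₀'(R) = 1, where φ₀(R) = β·R^{(β+1)/2}(1−R^{2β})/(1+R^{2β})^{3/2} and θ₀(R) = R^{(1−β)/2}(1−6R^{2β}+R^{4β})/(β²(1+R^{2β})^{3/2}). -/
import Mathlib


noncomputable def betaOf (α : ℝ) : ℝ := Real.sqrt (1 + 4 * α)

/-- `φ₀(R) = β R^((β+1)/2) (1-R^(2β)) / (1+R^(2β))^(3/2)`. -/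
noncomputable def phi0 (α : ℝ) (R : ℝ) : ℝ :=
  betaOf α * R ^ ((betaOf α + 1) / 2) * (1 - R ^ (2 * betaOf α)) /
    (1 + R ^ (2 * betaOf α)) ^ ((3 : ℝ) / 2)

/-- `θ₀(R) = R^((1-β)/2) (1-6R^(2β)+R^(4β)) / (β² (1+R^(2β))^(3/2))`. -/
noncomputable def theta0 (α : ℝ) (R : ℝ) : ℝ :=
  R ^ ((1 - betaOf α) / 2) * (1 - 6 * R ^ (2 * betaOf α) + R ^ (4 * betaOf α)) /
    (betaOf α ^ 2 * (1 + R ^ (2 * betaOf α)) ^ ((3 : ℝ) / 2))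

/-- The Wronskian of `φ₀` and `θ₀` is identically `1` on `(0,∞)`. -/
theorem wronskian_phi0_theta0 (α : ℝ) (hα : -(1 / 4 : ℝ) < α) :
    ∀ R : ℝ, 0 < R →
      deriv (phi0 α) R * theta0 α R - phi0 α R * deriv (theta0 α) R = 1 := by
  intro R hR
  have hb : 0 < betaOf α := Real.sqrt_pos.mpr (by linarith)
  set b := betaOf α with hbdef
  have hRne : R ≠ 0 := hR.ne'
  have hAp : (0:ℝ) < 1 + R ^ (2*b) := by positivity
  have hDne : (1 + R ^ (2*b)) ^ ((3:ℝ)/2) ≠ 0 := by positivity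
  -- basic derivatives
  have hA' : HasDerivAt (fun x : ℝ => x ^ (2*b)) (2*b * R ^ (2*b - 1)) R :=
    Real.hasDerivAt_rpow_const (Or.inl hRne)
  have hB' : HasDerivAt (fun x : ℝ => x ^ (4*b)) (4*b * R ^ (4*b - 1)) R :=
    Real.hasDerivAt_rpow_const (Or.inl hRne)
  have hP' : HasDerivAt (fun x : ℝ => x ^ ((b+1)/2)) (((b+1)/2) * R ^ ((b+1)/2 - 1)) R :=
    Real.hasDerivAt_rpow_const (Or.inl hRne)
  have hQ' : HasDerivAt (fun x : ℝ => x ^ ((1-b)/2)) (((1-b)/2) * R ^ ((1-b)/2 - 1)) R :=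
    Real.hasDerivAt_rpow_const (Or.inl hRne)
  have hD' : HasDerivAt (fun x : ℝ => (1 + x ^ (2*b)) ^ ((3:ℝ)/2))
      (2*b * R ^ (2*b - 1) * ((3:ℝ)/2) * (1 + R ^ (2*b)) ^ ((3:ℝ)/2 - 1)) R :=
    (hA'.const_add 1).rpow_const (Or.inl hAp.ne')
  -- phi0
  have hN1 : HasDerivAt (fun x : ℝ => b * x ^ ((b+1)/2) * (1 - x ^ (2*b)))
      ((b * (((b+1)/2) * R ^ ((b+1)/2 - 1))) * (1 - R ^ (2*b)) +
        (b * R ^ ((b+1)/2)) * (-(2*b * R ^ (2*b - 1)))) R :=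
    (hP'.const_mul b).mul (hA'.const_sub 1)
  have hphifun : phi0 α = fun x : ℝ =>
      b * x ^ ((b+1)/2) * (1 - x ^ (2*b)) / (1 + x ^ (2*b)) ^ ((3:ℝ)/2) := by
    funext x
    rw [phi0]
  have hphi : HasDerivAt (phi0 α)
      ((((b * (((b+1)/2) * R ^ ((b+1)/2 - 1))) * (1 - R ^ (2*b)) +
          (b * R ^ ((b+1)/2)) * (-(2*b * R ^ (2*b - 1)))) *
          ((1 + R ^ (2*b)) ^ ((3:ℝ)/2)) -
        (b * R ^ ((b+1)/2) * (1 - R ^ (2*b))) *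
          (2*b * R ^ (2*b - 1) * ((3:ℝ)/2) * (1 + R ^ (2*b)) ^ ((3:ℝ)/2 - 1))) /
        ((1 + R ^ (2*b)) ^ ((3:ℝ)/2)) ^ 2) R := by
    rw [hphifun]
    exact hN1.div hD' hDne
  -- theta0
  have hN2 : HasDerivAt (fun x : ℝ => x ^ ((1-b)/2) * (1 - 6 * x ^ (2*b) + x ^ (4*b)))
      ((((1-b)/2) * R ^ ((1-b)/2 - 1)) * (1 - 6 * R ^ (2*b) + R ^ (4*b)) +
        R ^ ((1-b)/2) * (-(6 * (2*b * R ^ (2*b - 1))) + 4*b * R ^ (4*b - 1))) R :=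
    hQ'.mul (((hA'.const_mul 6).const_sub 1).add hB')
  have hE' : HasDerivAt (fun x : ℝ => b ^ 2 * (1 + x ^ (2*b)) ^ ((3:ℝ)/2))
      (b ^ 2 * (2*b * R ^ (2*b - 1) * ((3:ℝ)/2) * (1 + R ^ (2*b)) ^ ((3:ℝ)/2 - 1))) R :=
    hD'.const_mul (b ^ 2)
  have hEne : b ^ 2 * (1 + R ^ (2*b)) ^ ((3:ℝ)/2) ≠ 0 := by positivity
  have hthfun : theta0 α = fun x : ℝ =>
      x ^ ((1-b)/2) * (1 - 6 * x ^ (2*b) + x ^ (4*b)) /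
        (b ^ 2 * (1 + x ^ (2*b)) ^ ((3:ℝ)/2)) := by
    funext x
    rw [theta0]
  have hth : HasDerivAt (theta0 α)
      ((((((1-b)/2) * R ^ ((1-b)/2 - 1)) * (1 - 6 * R ^ (2*b) + R ^ (4*b)) +
          R ^ ((1-b)/2) * (-(6 * (2*b * R ^ (2*b - 1))) + 4*b * R ^ (4*b - 1))) *
          (b ^ 2 * (1 + R ^ (2*b)) ^ ((3:ℝ)/2)) -
        (R ^ ((1-b)/2) * (1 - 6 * R ^ (2*b) + R ^ (4*b))) *
          (b ^ 2 * (2*b * R ^ (2*b - 1) * ((3:ℝ)/2) * (1 + R ^ (2*b)) ^ ((3:ℝ)/2 - 1)))) /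
        (b ^ 2 * (1 + R ^ (2*b)) ^ ((3:ℝ)/2)) ^ 2) R := by
    rw [hthfun]
    exact hN2.div hE' hEne
  rw [hphi.deriv, hth.deriv]
  simp only [phi0, theta0, ← hbdef]
  -- rewrite all rpow atoms
  have e1 : R ^ ((b+1)/2 - 1) = R ^ ((b+1)/2) / R := by
    rw [Real.rpow_sub hR, Real.rpow_one]
  have e2 : R ^ ((1-b)/2 - 1) = R ^ ((1-b)/2) / R := by
    rw [Real.rpow_sub hR, Real.rpow_one]
  have e3 : R ^ (2*b - 1) = R ^ (2*b) / R := by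
    rw [Real.rpow_sub hR, Real.rpow_one]
  have e3' : R ^ (4*b - 1) = R ^ (4*b) / R := by
    rw [Real.rpow_sub hR, Real.rpow_one]
  have e4 : R ^ (4*b) = R ^ (2*b) * R ^ (2*b) := by
    rw [show (4:ℝ)*b = 2*b + 2*b by ring, Real.rpow_add hR]
  have e5 : R ^ ((1-b)/2) = R / R ^ ((b+1)/2) := by
    rw [show (1-b)/2 = 1 - (b+1)/2 by ring, Real.rpow_sub hR, Real.rpow_one]
  rw [e1, e2, e3, e3', e4, e5]
  set C : ℝ := (1 + R ^ (2*b)) ^ ((1:ℝ)/2) with hCdef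
  have hC0 : 0 < C := Real.rpow_pos_of_pos hAp _
  have hC2 : C ^ 2 = 1 + R ^ (2*b) := by
    rw [hCdef, ← Real.rpow_natCast _ 2, ← Real.rpow_mul hAp.le]
    norm_num
  have e6 : (1 + R ^ (2*b)) ^ ((3:ℝ)/2) = C ^ 3 := by
    rw [hCdef, ← Real.rpow_natCast _ 3, ← Real.rpow_mul hAp.le]
    norm_num
  have e7 : (1 + R ^ (2*b)) ^ ((3:ℝ)/2 - 1) = C := by
    rw [hCdef]
    norm_num
  rw [e6, e7]
  have e8 : R ^ (2*b) = C ^ 2 - 1 := by rw [hC2]; ring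
  rw [e8]
  have hPpos : 0 < R ^ ((b+1)/2) := Real.rpow_pos_of_pos hR _
  set P : ℝ := R ^ ((b+1)/2) with hPdef
  field_simp
  ring
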